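/- arXiv:1810.02993 — 2 statements merged into one kernel-verified Lean document; each statement's English description precedes it below -/
import Mathlib

section
/- Let [u_0, u_1, …, u_n] be an ECT-system on a closed interval [a, b], i.e., for each 0 ≤ k ≤ n the Wronskian W_k(u_0, …, u_k)(x) is nonzero for all x in [a, b]. Then every nonzero linear combination c_0 u_0 + c_1 u_1 + ⋯ + c_n u_n has at most n zeros in [a, b], counted with multiplicity. -/
/-!
Induction on `n`; we show that `n + 1` zeros in `[a, b]`, counted with multiplicity, force all
coefficients to vanish. Since `W₀ = u₀` has no zero on `[a, b]`, dividing by `u₀` preserves the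
zeros of `F` with their multiplicities, and by Rolle's theorem `(F / u₀)'` has at least `n` zeros.
But `(F / u₀)' = ∑_{j < n} c_{j+1} v_j` with `v_j = (u_{j+1} / u₀)'`, and `(v₀, …, v_{n-1})` is
again an ECT-system because `W_{k+1}(u₀, …, u_{k+1}) = u₀^{k+2} W_k(v₀, …, v_k)` (Leibniz' rule
factors the Wronskian matrix through a lower triangular one). Hence `c₁ = ⋯ = cₙ = 0`, and then
`c₀ u₀ = F` vanishes at a point where `u₀ ≠ 0`.
-/

open Set Filter Topology Finset

theorem Multiset.exists_le_card_eq {α : Type*} {s : Multiset α} {k : ℕ} (h : k ≤ card s) :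
    ∃ t ≤ s, card t = k := by
  induction s using Quotient.inductionOn with
  | h l => exact ⟨l.take k, Multiset.coe_le.2 (List.take_sublist k l).subperm, by simpa using h⟩

theorem exists_finset_deriv_eq_zero {f : ℝ → ℝ} {a : ℝ} (S : Finset ℝ) :
    ∀ b, ContinuousOn f (Icc a b) → ↑S ⊆ Icc a b → (∀ x ∈ S, f x = 0) →
      ∃ T : Finset ℝ, Disjoint S T ∧ ↑T ⊆ Icc a b ∧ (∀ x ∈ T, deriv f x = 0) ∧
        #S ≤ #T + 1 := by
  -- With `b` free, the Rolle points found for `S` lie below `max S`, hence below the new one.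
  induction S using Finset.induction_on_max with
  | empty => exact fun _ _ _ _ => ⟨∅, by simp⟩
  | insert x S hlt ih =>
    intro b hf hS h0
    rcases S.eq_empty_or_nonempty with rfl | hne
    · exact ⟨∅, by simp⟩
    have hxab : x ∈ Icc a b := hS (mem_insert_self x S)
    have hSab : ↑S ⊆ Icc a b := (coe_subset.2 (subset_insert x S)).trans hS
    set y := S.max' hne
    have hyS : y ∈ S := S.max'_mem hne
    have hyx : y < x := hlt y hyS
    obtain ⟨T, hST, hTy, hT0, hcard⟩ := ih y (hf.mono (Icc_subset_Icc_right (hyx.le.trans hxab.2)))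
      (fun z hz => ⟨(hSab hz).1, S.le_max' z hz⟩) (fun z hz => h0 z (mem_insert_of_mem hz))
    obtain ⟨ξ, ⟨hyξ, hξx⟩, hξ⟩ := exists_deriv_eq_zero hyx
      (hf.mono (Icc_subset_Icc (hSab hyS).1 hxab.2))
      ((h0 y (mem_insert_of_mem hyS)).trans (h0 x (mem_insert_self x S)).symm)
    have hξT : ξ ∉ T := fun h => (hTy h).2.not_gt hyξ
    have hξS : ξ ∉ S := fun h => (S.le_max' ξ h).not_gt hyξ
    have hxT : x ∉ T := fun h => (hTy h).2.not_gt hyx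
    refine ⟨insert ξ T, ?_, ?_, ?_, ?_⟩
    · rw [Finset.disjoint_insert_left, Finset.disjoint_insert_right, Finset.mem_insert, not_or]
      exact ⟨⟨hξx.ne', hxT⟩, hξS, hST⟩
    · rw [coe_insert, Set.insert_subset_iff]
      exact ⟨⟨(hSab hyS).1.trans hyξ.le, hξx.le.trans hxab.2⟩,
        hTy.trans (Icc_subset_Icc_right (hyx.le.trans hxab.2))⟩
    · rintro z hz
      rcases mem_insert.1 hz with rfl | hz
      exacts [hξ, hT0 z hz]
    · rw [card_insert_of_notMem (fun h => (hlt x h).false), card_insert_of_notMem hξT]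
      omega

def HasZeros (f : ℝ → ℝ) (Z : Multiset ℝ) : Prop :=
  ∀ x, ∀ i < Z.count x, iteratedDeriv i f x = 0

namespace HasZeros

variable {f g : ℝ → ℝ} {Z : Multiset ℝ}

theorem of_le (h : HasZeros f Z) {Z' : Multiset ℝ} (hle : Z' ≤ Z) : HasZeros f Z' :=
  fun x i hi => h x i (hi.trans_le (Multiset.count_le_of_le x hle))

theorem congr (h : HasZeros f Z) (hfg : ∀ x ∈ Z, f =ᶠ[𝓝 x] g) : HasZeros g Z := fun x i hi =>
  (hfg x (Multiset.count_pos.1 (by omega))).iteratedDeriv_eq i ▸ h x i hi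

theorem mul {N : ℕ} (h : HasZeros f Z) (hcard : Multiset.card Z ≤ N + 1)
    (hf : ∀ x ∈ Z, ContDiffAt ℝ N f x) (hg : ∀ x ∈ Z, ContDiffAt ℝ N g x) :
    HasZeros (fun y => f y * g y) Z := by
  intro x i hi
  have hxZ : x ∈ Z := Multiset.count_pos.1 (by omega)
  have hiN : (i : WithTop ℕ∞) ≤ N := by
    have := Multiset.count_le_card x Z
    exact_mod_cast (by omega : i ≤ N)
  rw [iteratedDeriv_fun_mul ((hf x hxZ).of_le hiN) ((hg x hxZ).of_le hiN)]
  refine Finset.sum_eq_zero fun l hl => ?_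
  rw [h x l (by simp only [Finset.mem_range] at hl; omega), mul_zero, zero_mul]

theorem exists_hasZeros_deriv {a b : ℝ} (h : HasZeros f Z) (hf : ContinuousOn f (Icc a b))
    (hZ : ∀ x ∈ Z, x ∈ Icc a b) :
    ∃ Z', (∀ x ∈ Z', x ∈ Icc a b) ∧ HasZeros (deriv f) Z' ∧
      Multiset.card Z ≤ Multiset.card Z' + 1 := by
  obtain ⟨T, hZT, hT, hT0, hcard⟩ := exists_finset_deriv_eq_zero Z.toFinset b hf
    (fun x hx => hZ x (Multiset.mem_toFinset.1 hx))
    (fun x hx => by simpa using h x 0 (Multiset.count_pos.2 (Multiset.mem_toFinset.1 hx)))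
  refine ⟨Z - Z.dedup + T.val, ?_, ?_, ?_⟩
  · intro x hx
    rcases Multiset.mem_add.1 hx with hx | hx
    exacts [hZ x (Multiset.mem_of_le (Multiset.sub_le_self _ _) hx), hT hx]
  · intro x i hi
    rw [Multiset.count_add, Multiset.count_sub, Multiset.count_dedup] at hi
    by_cases hxT : x ∈ T
    · have hxZ : x ∉ Z := fun h => disjoint_left.1 hZT (Multiset.mem_toFinset.2 h) hxT
      have : i = 0 := by
        have := Multiset.nodup_iff_count_le_one.1 T.nodup x
        rw [Multiset.count_eq_zero.2 hxZ] at hi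
        omega
      subst this
      simpa using hT0 x hxT
    · rw [Multiset.count_eq_zero.2 (show x ∉ T.val from hxT)] at hi
      rw [← iteratedDeriv_succ']
      have hxZ : x ∈ Z := by
        by_contra hxZ
        simp [hxZ] at hi
      rw [if_pos hxZ] at hi
      exact h x (i + 1) (by omega)
  · rw [Multiset.card_add, Multiset.card_sub (Multiset.dedup_le Z), card_val]
    have := Multiset.card_le_card (Multiset.dedup_le Z)
    rw [Multiset.toFinset, Finset.card_mk] at hcard
    omega

end HasZeros

theorem hasZeros_sum_replicate {f : ℝ → ℝ} {Z : Finset ℝ} {m : ℝ → ℕ}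
    (h : ∀ x ∈ Z, ∀ i < m x, iteratedDeriv i f x = 0) :
    HasZeros f (∑ x ∈ Z, Multiset.replicate (m x) x) := by
  intro x i hi
  simp only [Multiset.count_sum', Multiset.count_replicate, sum_ite_eq'] at hi
  split_ifs at hi with hx
  exacts [h x hx i hi, absurd hi (Nat.not_lt_zero i)]

noncomputable def wronskian (k : ℕ) (u : ℕ → ℝ → ℝ) (x : ℝ) : ℝ :=
  (Matrix.of fun i j : Fin (k + 1) => iteratedDeriv i (u j) x).det

theorem wronskian_zero (u : ℕ → ℝ → ℝ) (x : ℝ) : wronskian 0 u x = u 0 x := by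
  simp [wronskian]

theorem wronskian_mul {k : ℕ} {g : ℕ → ℝ → ℝ} {w : ℝ → ℝ} {x : ℝ}
    (hg : ∀ j ≤ k, ContDiffAt ℝ k (g j) x) (hw : ContDiffAt ℝ k w x) :
    wronskian k (fun j y => g j y * w y) x = w x ^ (k + 1) * wronskian k g x := by
  let L : Matrix (Fin (k + 1)) (Fin (k + 1)) ℝ :=
    Matrix.of fun i l => (i : ℕ).choose l * iteratedDeriv (i - l) w x
  have hL : L.BlockTriangular OrderDual.toDual := fun i l hil => by
    simp [L, Nat.choose_eq_zero_of_lt (show (i : ℕ) < l from hil)]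
  have hprod : (Matrix.of fun i j : Fin (k + 1) => iteratedDeriv i (fun y => g j y * w y) x) =
      L * Matrix.of fun i j : Fin (k + 1) => iteratedDeriv i (g j) x := by
    ext i j
    have hi : (i : WithTop ℕ∞) ≤ k := by exact_mod_cast Nat.lt_succ_iff.1 i.is_lt
    rw [Matrix.of_apply, Matrix.mul_apply,
      iteratedDeriv_fun_mul ((hg j (Nat.lt_succ_iff.1 j.is_lt)).of_le hi) (hw.of_le hi)]
    simp only [L, Matrix.of_apply]
    rw [Fin.sum_univ_eq_sum_range
        (fun l => (i : ℕ).choose l * iteratedDeriv (i - l) w x * iteratedDeriv l (g j) x)]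
    refine Finset.sum_subset (range_subset_range.2 i.is_lt) (fun l _ hl => ?_) |>.trans ?_
    · simp [Nat.choose_eq_zero_of_lt (show (i : ℕ) < l by simpa using hl)]
    · exact Finset.sum_congr rfl fun l _ => by ring
  rw [wronskian, hprod, Matrix.det_mul, Matrix.det_of_isLowerTriangular L hL]
  simp [L, wronskian]

theorem wronskian_succ_of_eventuallyEq_one {k : ℕ} {g : ℕ → ℝ → ℝ} {x : ℝ}
    (h : g 0 =ᶠ[𝓝 x] fun _ => 1) :
    wronskian (k + 1) g x = wronskian k (fun j => deriv (g (j + 1))) x := by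
  have hcol : ∀ i : ℕ, iteratedDeriv i (g 0) x = if i = 0 then 1 else 0 := fun i => by
    rw [h.iteratedDeriv_eq, iteratedDeriv_const]
  rw [wronskian, Matrix.det_succ_column_zero, Fin.sum_univ_succ,
    Finset.sum_eq_zero fun i _ => by simp [hcol]]
  simp only [Fin.val_zero, pow_zero, Matrix.of_apply, hcol, if_true, one_mul, add_zero,
    Fin.succAbove_zero, wronskian]
  congr 1
  ext i j
  simp [iteratedDeriv_succ']

noncomputable def reducedSystem (u : ℕ → ℝ → ℝ) (j : ℕ) : ℝ → ℝ :=
  deriv fun y => u (j + 1) y / u 0 y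

theorem wronskian_succ_eq_mul_wronskian_reducedSystem {k : ℕ} {u : ℕ → ℝ → ℝ} {x : ℝ}
    (hu : ∀ j ≤ k + 1, ContDiffAt ℝ (k + 1) (u j) x) (hx : u 0 x ≠ 0) :
    wronskian (k + 1) u x = u 0 x ^ (k + 2) * wronskian k (reducedSystem u) x := by
  have hu0 := hu 0 (Nat.zero_le _)
  have hne : ∀ᶠ y in 𝓝 x, u 0 y ≠ 0 := hu0.continuousAt.eventually_ne hx
  have hdiv : wronskian (k + 1) u x = wronskian (k + 1) (fun j y => u j y / u 0 y * u 0 y) x := by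
    unfold wronskian
    congr
    ext i j
    refine EventuallyEq.iteratedDeriv_eq _ ?_
    filter_upwards [hne] with y hy
    rw [div_mul_cancel₀ _ hy]
  rw [hdiv, wronskian_mul (g := fun j y => u j y / u 0 y) (fun j hj => (hu j hj).div hu0 hx) hu0,
    wronskian_succ_of_eventuallyEq_one (by filter_upwards [hne] with y hy using div_self hy)]
  rfl

theorem deriv_sum_mul_inv_eq_sum_reducedSystem {n : ℕ} {c : ℕ → ℝ} {u : ℕ → ℝ → ℝ} {y : ℝ}
    (hu : ∀ j ≤ n, DifferentiableAt ℝ (fun z => u (j + 1) z / u 0 z) y)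
    (hu0 : ContinuousAt (u 0) y) (hy : u 0 y ≠ 0) :
    deriv (fun z => (∑ i ∈ range (n + 2), c i * u i z) * (u 0 z)⁻¹) y =
      ∑ j ∈ range (n + 1), c (j + 1) * reducedSystem u j y := by
  have hG : (fun z => (∑ i ∈ range (n + 2), c i * u i z) * (u 0 z)⁻¹) =ᶠ[𝓝 y]
      fun z => c 0 + ∑ j ∈ range (n + 1), c (j + 1) * (u (j + 1) z / u 0 z) := by
    filter_upwards [hu0.eventually_ne hy] with z hz
    rw [sum_mul, sum_range_succ', add_comm, mul_assoc, mul_inv_cancel₀ hz, mul_one]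
    simp only [mul_assoc, div_eq_mul_inv]
  rw [hG.deriv_eq, deriv_const_add,
    deriv_fun_sum fun j hj => (hu j (Nat.lt_succ_iff.1 (mem_range.1 hj))).const_mul _]
  exact sum_congr rfl fun j hj => deriv_const_mul _ (hu j (Nat.lt_succ_iff.1 (mem_range.1 hj)))

theorem HasZeros.exists_sum_reducedSystem {n : ℕ} {u : ℕ → ℝ → ℝ} {U : Set ℝ} {a b : ℝ}
    {c : ℕ → ℝ} {Z : Multiset ℝ} (hU : IsOpen U) (habU : Icc a b ⊆ U)
    (hu : ∀ i ≤ n + 1, ContDiffOn ℝ (n + 1) (u i) U) (hu0 : ∀ y ∈ U, u 0 y ≠ 0)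
    (hZ : ∀ x ∈ Z, x ∈ Icc a b) (hcard : Multiset.card Z ≤ n + 2)
    (hF : HasZeros (fun y => ∑ i ∈ range (n + 2), c i * u i y) Z) :
    ∃ Z', (∀ x ∈ Z', x ∈ Icc a b) ∧ Multiset.card Z ≤ Multiset.card Z' + 1 ∧
      HasZeros (fun y => ∑ j ∈ range (n + 1), c (j + 1) * reducedSystem u j y) Z' := by
  have hFU : ContDiffOn ℝ (n + 1) (fun y => ∑ i ∈ range (n + 2), c i * u i y) U :=
    ContDiffOn.sum fun i hi => contDiffOn_const.mul (hu i (Nat.lt_succ_iff.1 (mem_range.1 hi)))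
  have hinv : ContDiffOn ℝ (n + 1) (fun y => (u 0 y)⁻¹) U := (hu 0 (Nat.zero_le _)).inv hu0
  have hG := hF.mul hcard (fun x hx => hFU.contDiffAt (hU.mem_nhds (habU (hZ x hx))))
    (fun x hx => hinv.contDiffAt (hU.mem_nhds (habU (hZ x hx))))
  obtain ⟨Z', hZ'ab, hG', hcard'⟩ := hG.exists_hasZeros_deriv ((hFU.mul hinv).continuousOn.mono habU) hZ
  refine ⟨Z', hZ'ab, hcard', hG'.congr fun x hx => ?_⟩
  filter_upwards [hU.mem_nhds (habU (hZ'ab x hx))] with y hy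
  refine deriv_sum_mul_inv_eq_sum_reducedSystem (fun j hj => ?_)
    ((hu 0 (Nat.zero_le _)).continuousOn.continuousAt (hU.mem_nhds hy)) (hu0 y hy)
  exact ((hu (j + 1) (by omega)).div (hu 0 (Nat.zero_le _)) hu0).contDiffAt (hU.mem_nhds hy)
    |>.differentiableAt (by simp)

theorem forall_coeff_eq_zero_of_succ {n : ℕ} {c : ℕ → ℝ} {u : ℕ → ℝ → ℝ} {Z : Multiset ℝ}
    (hsucc : ∀ j < n, c (j + 1) = 0) (hF : HasZeros (fun y => ∑ i ∈ range (n + 1), c i * u i y) Z)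
    (hZ : Z ≠ 0) (hu : ∀ x ∈ Z, u 0 x ≠ 0) : ∀ i ≤ n, c i = 0 := by
  obtain ⟨x, hx⟩ := Multiset.exists_mem_of_ne_zero hZ
  have hFx : ∑ i ∈ range (n + 1), c i * u i x = 0 := by
    simpa using hF x 0 (Multiset.count_pos.2 hx)
  rw [sum_range_succ', sum_eq_zero fun j hj => by rw [hsucc j (mem_range.1 hj), zero_mul],
    zero_add] at hFx
  rintro (_ | j) hj
  exacts [(mul_eq_zero.1 hFx).resolve_right (hu x hx), hsucc j hj]

theorem forall_coeff_eq_zero_of_hasZeros {n : ℕ} {u : ℕ → ℝ → ℝ} {U : Set ℝ} {a b : ℝ}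
    {c : ℕ → ℝ} {Z : Multiset ℝ} (hU : IsOpen U) (habU : Icc a b ⊆ U)
    (hu : ∀ i ≤ n, ContDiffOn ℝ n (u i) U) (hW : ∀ k ≤ n, ∀ x ∈ Icc a b, wronskian k u x ≠ 0)
    (hZ : ∀ x ∈ Z, x ∈ Icc a b) (hcard : n + 1 ≤ Multiset.card Z)
    (hF : HasZeros (fun y => ∑ i ∈ range (n + 1), c i * u i y) Z) :
    ∀ i ≤ n, c i = 0 := by
  have hu0 : ∀ x ∈ Icc a b, u 0 x ≠ 0 := fun x hx => by
    simpa [wronskian_zero] using hW 0 (Nat.zero_le _) x hx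
  refine forall_coeff_eq_zero_of_succ ?_ hF (Multiset.card_pos.1 (by omega))
    fun x hx => hu0 x (hZ x hx)
  cases n with
  | zero => simp
  | succ n =>
    obtain ⟨Z₀, hZ₀Z, hZ₀⟩ := Multiset.exists_le_card_eq hcard
    set U' := U ∩ u 0 ⁻¹' {0}ᶜ
    have hU' : IsOpen U' :=
      (hu 0 (Nat.zero_le _)).continuousOn.isOpen_inter_preimage hU isOpen_compl_singleton
    have habU' : Icc a b ⊆ U' := fun x hx => ⟨habU hx, hu0 x hx⟩
    have huU' : ∀ i ≤ n + 1, ContDiffOn ℝ (n + 1) (u i) U' := fun i hi =>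
      (hu i hi).mono inter_subset_left
    obtain ⟨Z', hZ'ab, hcard', hZ'⟩ := (hF.of_le hZ₀Z).exists_sum_reducedSystem hU' habU' huU'
      (fun y hy => hy.2) (fun x hx => hZ x (Multiset.mem_of_le hZ₀Z hx)) hZ₀.le
    have hv : ∀ j ≤ n, ContDiffOn ℝ n (reducedSystem u j) U' := fun j hj =>
      ((huU' (j + 1) (by omega)).div (huU' 0 (Nat.zero_le _)) fun y hy => hy.2).deriv_of_isOpen
        hU' le_rfl
    have hW' : ∀ k ≤ n, ∀ x ∈ Icc a b, wronskian k (reducedSystem u) x ≠ 0 := fun k hk x hx =>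
      right_ne_zero_of_mul <| wronskian_succ_eq_mul_wronskian_reducedSystem (k := k)
        (fun j hj => ((hu j (by omega)).contDiffAt (hU.mem_nhds (habU hx))).of_le
          (by exact_mod_cast (by omega : k + 1 ≤ n + 1))) (hu0 x hx) ▸ hW (k + 1) (by omega) x hx
    exact fun j hj => forall_coeff_eq_zero_of_hasZeros (c := fun j => c (j + 1)) hU' habU' hv hW'
      hZ'ab (by omega) hZ' j (Nat.lt_succ_iff.1 hj)

theorem stmt_10_general (n : ℕ) (u : ℕ → ℝ → ℝ) (a b : ℝ)
    (hu : ∀ i ≤ n, ContDiff ℝ n (u i))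
    (hW : ∀ k ≤ n, ∀ x ∈ Set.Icc a b,
      Matrix.det (fun i j : Fin (k + 1) =>
        iteratedDeriv (i : ℕ) (u (j : ℕ)) x) ≠ 0)
    (c : ℕ → ℝ) (hc : ∃ i ≤ n, c i ≠ 0)
    (F : ℝ → ℝ) (hF : F = fun x => ∑ i ∈ Finset.range (n + 1), c i * u i x) :
    ∀ Z : Finset ℝ, (∀ x ∈ Z, x ∈ Set.Icc a b ∧ F x = 0) →
      ∑ x ∈ Z, sInf {m : ℕ | iteratedDeriv m F x ≠ 0} ≤ n := by
  intro Z hZ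
  by_contra! hlt
  obtain ⟨i, hi, hci⟩ := hc
  -- If every derivative of `F` vanishes at `x`, then `sInf ∅ = 0` and `x` just contributes nothing.
  set mult := fun x => sInf {m : ℕ | iteratedDeriv m F x ≠ 0}
  have hF_zeros : HasZeros F (∑ x ∈ Z, Multiset.replicate (mult x) x) :=
    hasZeros_sum_replicate fun x _ i hi => not_not.1 (Nat.notMem_of_lt_sInf hi)
  subst hF
  refine hci (forall_coeff_eq_zero_of_hasZeros isOpen_univ (subset_univ _)
    (fun i hi => (hu i hi).contDiffOn) hW ?_ ?_ hF_zeros i hi)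
  · simpa [Multiset.mem_sum] using fun x y hy hxy => Multiset.eq_of_mem_replicate hxy ▸ (hZ y hy).1
  · simpa [Multiset.card_sum] using hlt

/-- Karlin–Studden: if (u₀, …, uₙ) is an ECT system on [a,b] (all Wronskians
W₀,…,Wₙ nonvanishing on [a,b]), then every nonzero linear combination
F = ∑ cᵢ uᵢ has at most n zeros in [a,b], counted with multiplicity (the
multiplicity of a zero x₀ being the least m with F⁽ᵐ⁾(x₀) ≠ 0). -/
theorem stmt_10 (n : ℕ) (u : ℕ → ℝ → ℝ) (a b : ℝ) (hab : a ≤ b)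
    (hu : ∀ i ≤ n, ContDiff ℝ n (u i))
    (hW : ∀ k ≤ n, ∀ x ∈ Set.Icc a b,
      Matrix.det (fun i j : Fin (k + 1) =>
        iteratedDeriv (i : ℕ) (u (j : ℕ)) x) ≠ 0)
    (c : ℕ → ℝ) (hc : ∃ i ≤ n, c i ≠ 0)
    (F : ℝ → ℝ) (hF : F = fun x => ∑ i ∈ Finset.range (n + 1), c i * u i x) :
    ∀ Z : Finset ℝ, (∀ x ∈ Z, x ∈ Set.Icc a b ∧ F x = 0) →
      ∑ x ∈ Z, sInf {m : ℕ | iteratedDeriv m F x ≠ 0} ≤ n :=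
  stmt_10_general n u a b hu hW c hc F hF
end

section
/- Let λ_0, …, λ_7 be real numbers, not all zero, and let u_0(x) = x^5, u_1(x) = x^4, u_2(x) = x^6, u_3(x) = x^7, u_4(x) = 1, u_5(x) = x^2, u_6(x) = x^3 − x^7, u_7(x) = x + 3x^9. Then the function p(x) = Σ_{k=0}^7 λ_k u_k(x) has at most 7 roots in (0, ∞), counted without multiplicity. -/
/-!
Since `x f' - k f = x ^ (k + 1) (x ^ (-k) f)'`, Rolle's theorem shows that the operator
`x d/dx - k` loses at most one positive root. On polynomials it multiplies the coefficient of
`X ^ n` by `n - k`, so applying it for `k = 0, 2, 3, …, 7` turns `P` into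
`720 c₁ X + 45360 c₉ X ^ 9`, which has no positive root when `c₁ c₉ ≥ 0` and `(c₁, c₉) ≠ 0`.
Hence `P` has at most seven positive roots; if `c₁ = c₉ = 0`, then `P` has degree at most `7`.
-/

open Polynomial Set

theorem exists_mul_deriv_sub_mul_eq_zero {f f' : ℝ → ℝ} (k : ℝ) {a b : ℝ} (ha : 0 < a)
    (hab : a < b) (hf : ∀ x ∈ Icc a b, HasDerivAt f (f' x) x) (hfa : f a = 0) (hfb : f b = 0) :
    ∃ c ∈ Ioo a b, c * f' c - k * f c = 0 := by
  have hg : ∀ x ∈ Icc a b, HasDerivAt (fun y => f y * y ^ (-k))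
      (x ^ (-k - 1) * (x * f' x - k * f x)) x := by
    intro x hx
    have hx0 : 0 < x := ha.trans_le hx.1
    refine ((hf x hx).mul (Real.hasDerivAt_rpow_const (p := -k) (Or.inl hx0.ne'))).congr_deriv ?_
    rw [Real.rpow_sub_one hx0.ne']
    field_simp
    ring
  obtain ⟨c, hc, hc0⟩ := exists_hasDerivAt_eq_zero hab
    (fun x hx => (hg x hx).continuousAt.continuousWithinAt) (by simp [hfa, hfb])
    (fun x hx => hg x (Ioo_subset_Icc_self hx))
  exact ⟨c, hc, (mul_eq_zero.mp hc0).resolve_left (Real.rpow_pos_of_pos (ha.trans hc.1) _).ne'⟩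

namespace Polynomial

noncomputable def eulerOp (k : ℝ) (P : ℝ[X]) : ℝ[X] := X * derivative P - C k * P

/-- Empty for `P = 0`, since `roots 0 = 0`. -/
noncomputable def posRoots (P : ℝ[X]) : Finset ℝ := P.roots.toFinset.filter (0 < ·)

@[simp] theorem eulerOp_zero (k : ℝ) : eulerOp k 0 = 0 := by simp [eulerOp]

theorem coeff_eulerOp (k : ℝ) (P : ℝ[X]) (n : ℕ) :
    (eulerOp k P).coeff n = (n - k) * P.coeff n := by
  rcases n with _ | n
  · simp [eulerOp]
  · simp [eulerOp, coeff_X_mul, coeff_derivative]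
    ring

theorem coeff_foldr_eulerOp (ks : List ℝ) (P : ℝ[X]) (n : ℕ) :
    (ks.foldr eulerOp P).coeff n = (ks.map ((n : ℝ) - ·)).prod * P.coeff n := by
  induction ks with
  | nil => simp
  | cons k ks ih =>
    simp only [List.foldr_cons, coeff_eulerOp, ih, List.map_cons, List.prod_cons]
    ring

theorem eval_eulerOp (k x : ℝ) (P : ℝ[X]) :
    (eulerOp k P).eval x = x * P.derivative.eval x - k * P.eval x := by
  simp [eulerOp]

theorem mem_posRoots {P : ℝ[X]} (hP : P ≠ 0) {x : ℝ} :
    x ∈ posRoots P ↔ 0 < x ∧ P.eval x = 0 := by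
  simp [posRoots, hP, and_comm]

theorem posRoots_eq_empty {P : ℝ[X]} (h : ∀ x, 0 < x → P.eval x ≠ 0) : posRoots P = ∅ := by
  ext x
  simp only [posRoots, Finset.mem_filter, Multiset.mem_toFinset, mem_roots', IsRoot.def]
  grind

theorem card_posRoots_le_natDegree (P : ℝ[X]) : (posRoots P).card ≤ P.natDegree :=
  ((Finset.card_filter_le _ _).trans (Multiset.toFinset_card_le _)).trans (card_roots' P)

theorem card_posRoots_le_eulerOp (k : ℝ) {P : ℝ[X]} (h : eulerOp k P ≠ 0) :
    (posRoots P).card ≤ (posRoots (eulerOp k P)).card + 1 := by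
  have hP : P ≠ 0 := by
    rintro rfl
    simp at h
  refine Finset.card_le_of_interleaved fun x hx y hy hxy _ => ?_
  rw [mem_posRoots hP] at hx hy
  obtain ⟨c, hc, hc0⟩ := exists_mul_deriv_sub_mul_eq_zero k hx.1 hxy
    (fun z _ => P.hasDerivAt z) hx.2 hy.2
  exact ⟨c, (mem_posRoots h).2 ⟨hx.1.trans hc.1, by rwa [eval_eulerOp]⟩, hc⟩

theorem card_posRoots_le_foldr_eulerOp (ks : List ℝ) {P : ℝ[X]} (h : ks.foldr eulerOp P ≠ 0) :
    (posRoots P).card ≤ (posRoots (ks.foldr eulerOp P)).card + ks.length := by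
  induction ks with
  | nil => simp
  | cons k ks ih =>
    rw [List.foldr_cons] at h ⊢
    have h' : ks.foldr eulerOp P ≠ 0 := by
      intro h0
      simp [h0] at h
    grw [ih h', card_posRoots_le_eulerOp k h, List.length_cons]
    omega

theorem eval_monomial_add_monomial_ne_zero {a b x : ℝ} (m n : ℕ) (hab : 0 ≤ a * b)
    (h0 : a ≠ 0 ∨ b ≠ 0) (hx : 0 < x) : (monomial m a + monomial n b).eval x ≠ 0 := by
  rw [eval_add, eval_monomial, eval_monomial]
  rcases eq_or_ne a 0 with rfl | ha
  · simpa [hx.ne'] using h0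
  · intro h
    have hpos : 0 < a * (a * x ^ m + b * x ^ n) := by
      rw [mul_add, ← mul_assoc, ← mul_assoc]
      have := mul_nonneg hab (pow_pos hx n).le
      have := mul_pos (mul_self_pos.2 ha) (pow_pos hx m)
      linarith
    simp [h] at hpos

theorem foldr_eulerOp_eq (P : ℝ[X]) (hdeg : P.natDegree ≤ 9) (h8 : P.coeff 8 = 0) :
    [0, 2, 3, 4, 5, 6, 7].foldr eulerOp P =
      monomial 1 (720 * P.coeff 1) + monomial 9 (45360 * P.coeff 9) := by
  ext n
  rw [coeff_foldr_eulerOp, coeff_add, coeff_monomial, coeff_monomial]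
  rcases le_or_gt n 9 with hn | hn
  · interval_cases n <;> norm_num [h8]
  · rw [coeff_eq_zero_of_natDegree_lt (hdeg.trans_lt hn), if_neg (by omega), if_neg (by omega)]
    simp

theorem card_posRoots_le_seven (P : ℝ[X]) (hdeg : P.natDegree ≤ 9) (h8 : P.coeff 8 = 0)
    (h19 : 0 ≤ P.coeff 1 * P.coeff 9) : (posRoots P).card ≤ 7 := by
  by_cases h0 : P.coeff 1 = 0 ∧ P.coeff 9 = 0
  · refine (card_posRoots_le_natDegree P).trans (natDegree_le_iff_coeff_eq_zero.2 fun n hn => ?_)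
    obtain rfl | rfl | hn : n = 8 ∨ n = 9 ∨ 9 < n := by omega
    exacts [h8, h0.2, coeff_eq_zero_of_natDegree_lt (hdeg.trans_lt hn)]
  have hQ : ∀ x, 0 < x →
      (monomial 1 (720 * P.coeff 1) + monomial 9 (45360 * P.coeff 9)).eval x ≠ 0 :=
    fun x => eval_monomial_add_monomial_ne_zero 1 9 (by nlinarith) (by grind)
  have hQ0 : [0, 2, 3, 4, 5, 6, 7].foldr eulerOp P ≠ 0 := by
    rw [foldr_eulerOp_eq P hdeg h8]
    exact fun h => hQ 1 one_pos (by simp [h])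
  have h := card_posRoots_le_foldr_eulerOp _ hQ0
  rwa [foldr_eulerOp_eq P hdeg h8, posRoots_eq_empty hQ] at h

end Polynomial

noncomputable def basisCombination (lam : Fin 8 → ℝ) : ℝ[X] :=
  C (lam 0) * X ^ 5 + C (lam 1) * X ^ 4 + C (lam 2) * X ^ 6 + C (lam 3) * X ^ 7 + C (lam 4) +
    C (lam 5) * X ^ 2 + C (lam 6) * (X ^ 3 - X ^ 7) + C (lam 7) * (X + 3 * X ^ 9)

theorem natDegree_basisCombination_le (lam : Fin 8 → ℝ) :
    (basisCombination lam).natDegree ≤ 9 := by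
  unfold basisCombination
  compute_degree

theorem coeff_basisCombination_eight (lam : Fin 8 → ℝ) : (basisCombination lam).coeff 8 = 0 := by
  simp [basisCombination, coeff_X, coeff_X_pow]

theorem coeff_basisCombination_nine (lam : Fin 8 → ℝ) :
    (basisCombination lam).coeff 9 = 3 * (basisCombination lam).coeff 1 := by
  simp [basisCombination, coeff_X, coeff_X_pow]
  ring

theorem basisCombination_ne_zero {lam : Fin 8 → ℝ} (hlam : lam ≠ 0) :
    basisCombination lam ≠ 0 := by
  intro h
  have hc (n : ℕ) : (basisCombination lam).coeff n = 0 := by simp [h]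
  have h0 := hc 0; have h1 := hc 1; have h2 := hc 2; have h3 := hc 3
  have h4 := hc 4; have h5 := hc 5; have h6 := hc 6; have h7 := hc 7
  simp [basisCombination, coeff_X, coeff_X_pow, coeff_C] at h0 h1 h2 h3 h4 h5 h6 h7
  apply hlam
  ext i
  fin_cases i <;> simp <;> linarith

/-- A nonzero combination of x⁵, x⁴, x⁶, x⁷, 1, x², x³-x⁷, x+3x⁹ has at most 7
positive roots (counted without multiplicity). -/
theorem stmt_17 (lam : Fin 8 → ℝ) (hlam : lam ≠ 0) (p : ℝ → ℝ)
    (hp : p = fun x => lam 0 * x ^ 5 + lam 1 * x ^ 4 + lam 2 * x ^ 6 +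
      lam 3 * x ^ 7 + lam 4 * 1 + lam 5 * x ^ 2 +
      lam 6 * (x ^ 3 - x ^ 7) + lam 7 * (x + 3 * x ^ 9)) :
    {x : ℝ | 0 < x ∧ p x = 0}.Finite ∧
    {x : ℝ | 0 < x ∧ p x = 0}.ncard ≤ 7 := by
  have hP := basisCombination_ne_zero hlam
  have hroots : {x : ℝ | 0 < x ∧ p x = 0} = posRoots (basisCombination lam) := by
    ext x
    rw [Finset.mem_coe, mem_posRoots hP, hp]
    simp [basisCombination]
  rw [hroots, Set.ncard_coe_finset]
  refine ⟨Finset.finite_toSet _, card_posRoots_le_seven _ (natDegree_basisCombination_le lam)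
    (coeff_basisCombination_eight lam) ?_⟩
  rw [coeff_basisCombination_nine]
  nlinarith [mul_self_nonneg ((basisCombination lam).coeff 1)]
end
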